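/- Fix 0 < q < 1, θ > 0 and α with 0 < α < q^θ. Then f(q,θ) - g(q,θ) > 0, where f = Ψ'_q(θ)/(log q)^2 - Ψ_q(θ)/log q - log(1-q)/log q and g = (Ψ'_q(θ)/(log q)^2)(α/q^θ) - Ψ_q(log_q α)/log q - log(1-q)/log q. -/

import Mathlib

open Complex Real

/-- The infinite q-Pochhammer symbol `(a; q)_∞ = ∏_{k=0}^∞ (1 - a q^k)`. -/
noncomputable def qPoch (a q : ℂ) : ℂ := ∏' k : ℕ, (1 - a * q ^ k)

/-- The q-Gamma function `Γ_q(z) = (1-q)^{1-z} (q;q)_∞ / (q^z;q)_∞`. -/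
noncomputable def qGamma (q : ℝ) (z : ℂ) : ℂ :=
  ((1 - q : ℂ)) ^ ((1 : ℂ) - z) * qPoch (q : ℂ) (q : ℂ) / qPoch ((q : ℂ) ^ z) (q : ℂ)

/-- The q-digamma function `Ψ_q(z) = d/dz log Γ_q(z)`. -/
noncomputable def qDigamma (q : ℝ) (z : ℂ) : ℂ :=
  deriv (fun w => Complex.log (qGamma q w)) z

/-- `κ(q,θ) = Ψ'_q(θ) / ((log q)^2 q^θ)`. -/
noncomputable def kappaC (q θ : ℝ) : ℂ :=
  deriv (qDigamma q) (θ : ℂ) / (((Real.log q : ℂ)) ^ 2 * (q : ℂ) ^ (θ : ℂ))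

/-- `f(q,θ) = Ψ'_q(θ)/(log q)^2 - Ψ_q(θ)/log q - log(1-q)/log q`. -/
noncomputable def fC (q θ : ℝ) : ℂ :=
  deriv (qDigamma q) (θ : ℂ) / ((Real.log q : ℂ)) ^ 2
    - qDigamma q (θ : ℂ) / (Real.log q : ℂ)
    - (Real.log (1 - q) : ℂ) / (Real.log q : ℂ)

/-- `f₀(Z) = -f (log q) Z + κ q^Z + log((q^Z; q)_∞)`. -/
noncomputable def f0 (q θ : ℝ) (Z : ℂ) : ℂ :=
  -fC q θ * (Real.log q : ℂ) * Z + kappaC q θ * (q : ℂ) ^ Z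
    + Complex.log (qPoch ((q : ℂ) ^ Z) (q : ℂ))

/-- `A = log_q α`. -/
noncomputable def Aq (q α : ℝ) : ℝ := Real.log α / Real.log q

/-- `g(q,θ) = (Ψ'_q(θ)/(log q)^2)(α/q^θ) - Ψ_q(A)/log q - log(1-q)/log q`. -/
noncomputable def gC (q θ α : ℝ) : ℂ :=
  deriv (qDigamma q) (θ : ℂ) / ((Real.log q : ℂ)) ^ 2 * ((α : ℂ) / (q : ℂ) ^ (θ : ℂ))
    - qDigamma q ((Aq q α : ℝ) : ℂ) / (Real.log q : ℂ)
    - (Real.log (1 - q) : ℂ) / (Real.log q : ℂ)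

/-- `g₀(Z) = -g (log q) Z + κ q^Z + log((q^Z; q)_∞)`. -/
noncomputable def g0 (q θ α : ℝ) (Z : ℂ) : ℂ :=
  -gC q θ α * (Real.log q : ℂ) * Z + kappaC q θ * (q : ℂ) ^ Z
    + Complex.log (qPoch ((q : ℂ) ^ Z) (q : ℂ))

/-!
For `0 < re w`, `Γ_q(w) = exp ((1 - w) log (1 - q) + ∑ₖ log (1 - q^(k+1)) - ∑ₖ log (1 - q^w qᵏ))`,
and termwise differentiation gives the Lambert-series formulas
`Ψ_q(t) = -log (1 - q) + log q · λ₁(q^t)` and `Ψ'_q(t) = (log q)² · λ₂(q^t)` for real `t > 0`,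
where `λₙ(z) = ∑ₖ z qᵏ / (1 - z qᵏ)ⁿ`.
With `x = q^θ` and `q^(log_q α) = α`, this turns `f - g` into
`λ₁(α) - (λ₁(x) + (α - x) / x · λ₂(x))`, whose `k`-th term is the gap at `α qᵏ` between the
strictly convex function `z ↦ z / (1 - z)` and its tangent line at `x qᵏ`; it is positive
since `α ≠ x`.
-/

open Filter Topology

section LambertSeries

variable {𝕜 : Type*} [NormedField 𝕜]

noncomputable def lambertSeries (n : ℕ) (q z : 𝕜) : 𝕜 :=
  ∑' k : ℕ, z * q ^ k / (1 - z * q ^ k) ^ n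

lemma norm_mul_pow_le {q : 𝕜} (hq : ‖q‖ ≤ 1) (z : 𝕜) (k : ℕ) : ‖z * q ^ k‖ ≤ ‖z‖ := by
  rw [norm_mul, norm_pow]
  exact mul_le_of_le_one_right (norm_nonneg z) (pow_le_one₀ (norm_nonneg q) hq)

lemma norm_div_one_sub_pow_le {u : 𝕜} {r : ℝ} (hu : ‖u‖ ≤ r) (hr : r < 1) (n : ℕ) :
    ‖u / (1 - u) ^ n‖ ≤ ‖u‖ / (1 - r) ^ n := by
  have h : 1 - r ≤ ‖1 - u‖ := by
    have := norm_sub_norm_le (1 : 𝕜) u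
    rw [norm_one] at this
    linarith
  rw [norm_div, norm_pow]
  exact div_le_div_of_nonneg_left (norm_nonneg u) (pow_pos (by linarith) n)
    (pow_le_pow_left₀ (by linarith) h n)

lemma summable_lambertSeries [CompleteSpace 𝕜] {q z : 𝕜} (hq : ‖q‖ < 1) (hz : ‖z‖ < 1)
    (n : ℕ) : Summable fun k : ℕ => z * q ^ k / (1 - z * q ^ k) ^ n := by
  refine .of_norm_bounded ((summable_geometric_of_lt_one (norm_nonneg q) hq).mul_left
    (‖z‖ / (1 - ‖z‖) ^ n)) fun k => ?_
  calc _ ≤ ‖z * q ^ k‖ / (1 - ‖z‖) ^ n := norm_div_one_sub_pow_le (norm_mul_pow_le hq.le z k) hz n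
    _ = _ := by rw [norm_mul, norm_pow]; ring

end LambertSeries

lemma ofReal_lambertSeries (n : ℕ) (q x : ℝ) :
    ((lambertSeries n q x : ℝ) : ℂ) = lambertSeries n (q : ℂ) (x : ℂ) := by
  rw [lambertSeries, Complex.ofReal_tsum]
  push_cast
  rfl

lemma div_one_sub_add_sub_div_one_sub_sq_lt {a b : ℝ} (ha : a < 1) (hb : b < 1) (hab : a ≠ b) :
    a / (1 - a) + (b - a) / (1 - a) ^ 2 < b / (1 - b) := by
  have ha' : 0 < 1 - a := by linarith
  have hb' : 0 < 1 - b := by linarith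
  have gap : b / (1 - b) - (a / (1 - a) + (b - a) / (1 - a) ^ 2)
      = (b - a) ^ 2 / ((1 - a) ^ 2 * (1 - b)) := by
    field_simp
    ring
  have : 0 < (b - a) ^ 2 / ((1 - a) ^ 2 * (1 - b)) :=
    div_pos (pow_two_pos_of_ne_zero (sub_ne_zero.2 hab.symm)) (by positivity)
  linarith

lemma div_one_sub_add_sub_div_one_sub_sq_le {a b : ℝ} (ha : a < 1) (hb : b < 1) :
    a / (1 - a) + (b - a) / (1 - a) ^ 2 ≤ b / (1 - b) := by
  rcases eq_or_ne a b with rfl | hab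
  · simp
  · exact (div_one_sub_add_sub_div_one_sub_sq_lt ha hb hab).le

lemma lambertSeries_one_add_lt {q x y : ℝ} (hq : |q| < 1) (hx : |x| < 1) (hy : |y| < 1)
    (hx0 : x ≠ 0) (hxy : x ≠ y) :
    lambertSeries 1 q x + (y - x) / x * lambertSeries 2 q x < lambertSeries 1 q y := by
  rw [← Real.norm_eq_abs] at hq hx hy
  have hlt {z : ℝ} (hz : ‖z‖ < 1) (k : ℕ) : z * q ^ k < 1 :=
    (le_abs_self _).trans_lt ((norm_mul_pow_le hq.le z k).trans_lt hz)
  have tangent (k : ℕ) :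
      x * q ^ k / (1 - x * q ^ k) ^ 1 + (y - x) / x * (x * q ^ k / (1 - x * q ^ k) ^ 2)
        = x * q ^ k / (1 - x * q ^ k) + (y * q ^ k - x * q ^ k) / (1 - x * q ^ k) ^ 2 := by
    field_simp
  have hs1 := summable_lambertSeries hq hx 1
  have hs2 := (summable_lambertSeries hq hx 2).mul_left ((y - x) / x)
  rw [lambertSeries, lambertSeries, ← tsum_mul_left, ← hs1.tsum_add hs2]
  refine (hs1.add hs2).tsum_lt_tsum (i := 0) (fun k => ?_) ?_ (summable_lambertSeries hq hy 1)
  · rw [tangent, pow_one]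
    exact div_one_sub_add_sub_div_one_sub_sq_le (hlt hx k) (hlt hy k)
  · rw [tangent, pow_one]
    exact div_one_sub_add_sub_div_one_sub_sq_lt (hlt hx 0) (hlt hy 0) (by simpa using hxy)

lemma summable_log_one_sub_mul_pow (z : ℂ) {q : ℂ} (hq : ‖q‖ < 1) :
    Summable fun k : ℕ => log (1 - z * q ^ k) := by
  simpa only [sub_eq_add_neg] using
    summable_log_one_add_of_summable ((summable_geometric_of_norm_lt_one hq).mul_left z).neg

lemma cexp_tsum_log_one_sub_mul_pow {z q : ℂ} (hz : ‖z‖ < 1) (hq : ‖q‖ < 1) :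
    exp (∑' k : ℕ, log (1 - z * q ^ k)) = qPoch z q := by
  refine cexp_tsum_eq_tprod (fun k => sub_ne_zero.2 fun h => ?_)
    (summable_log_one_sub_mul_pow z hq)
  have := (norm_mul_pow_le hq.le z k).trans_lt hz
  rw [← h, norm_one] at this
  exact this.false

lemma tsum_log_one_sub_ofReal_mul_pow {x q : ℝ} (h : ∀ k : ℕ, x * q ^ k ≤ 1) :
    ∑' k : ℕ, log (1 - (x : ℂ) * (q : ℂ) ^ k)
      = ((∑' k : ℕ, Real.log (1 - x * q ^ k) : ℝ) : ℂ) := by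
  rw [ofReal_tsum]
  refine tsum_congr fun k => ?_
  rw [ofReal_log (sub_nonneg.2 (h k))]
  push_cast
  rfl

section QDigammaSeries

variable {q : ℝ}

lemma norm_ofReal_cpow_mul_pow (hq : 0 < q) (w : ℂ) (k : ℕ) :
    ‖(q : ℂ) ^ w * (q : ℂ) ^ k‖ = q ^ w.re * q ^ k := by
  rw [norm_mul, norm_cpow_eq_rpow_re_of_pos hq, norm_pow, norm_real, Real.norm_of_nonneg hq.le]

lemma norm_ofReal_cpow_mul_pow_le (hq0 : 0 < q) (hq1 : q < 1) {ε : ℝ} {w : ℂ} (hw : ε ≤ w.re)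
    (k : ℕ) : ‖(q : ℂ) ^ w * (q : ℂ) ^ k‖ ≤ q ^ ε * q ^ k := by
  rw [norm_ofReal_cpow_mul_pow hq0]
  exact mul_le_mul_of_nonneg_right (Real.rpow_le_rpow_of_exponent_ge hq0 hq1.le hw)
    (pow_nonneg hq0.le k)

lemma norm_ofReal_cpow_mul_pow_lt_one (hq0 : 0 < q) (hq1 : q < 1) {w : ℂ} (hw : 0 < w.re)
    (k : ℕ) : ‖(q : ℂ) ^ w * (q : ℂ) ^ k‖ < 1 := by
  rw [norm_ofReal_cpow_mul_pow hq0]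
  exact mul_lt_one_of_nonneg_of_lt_one_left (by positivity) (Real.rpow_lt_one hq0.le hq1 hw)
    (pow_le_one₀ hq0.le hq1.le)

lemma hasDerivAt_ofReal_cpow_mul_pow (hq : 0 < q) (w : ℂ) (k : ℕ) :
    HasDerivAt (fun v : ℂ => (q : ℂ) ^ v * (q : ℂ) ^ k)
      (Real.log q * ((q : ℂ) ^ w * (q : ℂ) ^ k)) w := by
  have h := ((hasStrictDerivAt_const_cpow (Or.inl (ofReal_ne_zero.2 hq.ne'))).hasDerivAt
    (x := w)).mul_const ((q : ℂ) ^ k)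
  rwa [← ofReal_log hq.le, mul_right_comm, mul_comm] at h

lemma hasDerivAt_log_one_sub_ofReal_cpow_mul_pow (hq0 : 0 < q) (hq1 : q < 1) {w : ℂ}
    (hw : 0 < w.re) (k : ℕ) :
    HasDerivAt (fun v : ℂ => log (1 - (q : ℂ) ^ v * (q : ℂ) ^ k))
      (-Real.log q * ((q : ℂ) ^ w * (q : ℂ) ^ k / (1 - (q : ℂ) ^ w * (q : ℂ) ^ k) ^ 1)) w := by
  have hslit : 1 - (q : ℂ) ^ w * (q : ℂ) ^ k ∈ slitPlane := by
    rw [sub_eq_add_neg]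
    exact mem_slitPlane_of_norm_lt_one
      (by rw [norm_neg]; exact norm_ofReal_cpow_mul_pow_lt_one hq0 hq1 hw k)
  convert ((hasDerivAt_ofReal_cpow_mul_pow hq0 w k).const_sub 1).clog hslit using 1
  ring

lemma hasDerivAt_lambertTerm_ofReal_cpow (hq0 : 0 < q) (hq1 : q < 1) {w : ℂ} (hw : 0 < w.re)
    (k : ℕ) :
    HasDerivAt (fun v : ℂ => (q : ℂ) ^ v * (q : ℂ) ^ k / (1 - (q : ℂ) ^ v * (q : ℂ) ^ k) ^ 1)
      (Real.log q * ((q : ℂ) ^ w * (q : ℂ) ^ k / (1 - (q : ℂ) ^ w * (q : ℂ) ^ k) ^ 2)) w := by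
  have hne : 1 - (q : ℂ) ^ w * (q : ℂ) ^ k ≠ 0 := by
    rw [sub_ne_zero]
    exact fun h => (norm_ofReal_cpow_mul_pow_lt_one hq0 hq1 hw k).ne (by rw [← h, norm_one])
  have h := hasDerivAt_ofReal_cpow_mul_pow hq0 w k
  simp only [pow_one]
  refine (h.fun_div (h.const_sub 1) hne).congr_deriv ?_
  ring

lemma hasDerivAt_tsum_of_hasDerivAt_lambertTerm (hq0 : 0 < q) (hq1 : q < 1) {g : ℕ → ℂ → ℂ}
    {c : ℂ} {n : ℕ}
    (hg : ∀ k v, 0 < v.re →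
      HasDerivAt (g k) (c * ((q : ℂ) ^ v * (q : ℂ) ^ k / (1 - (q : ℂ) ^ v * (q : ℂ) ^ k) ^ n)) v)
    {w : ℂ} (hw : 0 < w.re) (hsum : Summable fun k => g k w) :
    HasDerivAt (fun v => ∑' k, g k v) (c * lambertSeries n (q : ℂ) ((q : ℂ) ^ w)) w := by
  set ε := w.re / 2
  have hε : 0 < ε := by positivity
  have hwε : w ∈ {v : ℂ | ε < v.re} := half_lt_self hw
  have hqε : q ^ ε < 1 := Real.rpow_lt_one hq0.le hq1 hε
  have hbound (k : ℕ) (v : ℂ) (hv : v ∈ {v : ℂ | ε < v.re}) :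
      ‖c * ((q : ℂ) ^ v * (q : ℂ) ^ k / (1 - (q : ℂ) ^ v * (q : ℂ) ^ k) ^ n)‖
        ≤ ‖c‖ / (1 - q ^ ε) ^ n * q ^ ε * q ^ k := by
    have hu := norm_ofReal_cpow_mul_pow_le hq0 hq1 (le_of_lt hv) k
    have hu' : q ^ ε * q ^ k ≤ q ^ ε :=
      mul_le_of_le_one_right (by positivity) (pow_le_one₀ hq0.le hq1.le)
    calc _ = ‖c‖ * ‖(q : ℂ) ^ v * (q : ℂ) ^ k / (1 - (q : ℂ) ^ v * (q : ℂ) ^ k) ^ n‖ := norm_mul _ _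
      _ ≤ ‖c‖ * (‖(q : ℂ) ^ v * (q : ℂ) ^ k‖ / (1 - q ^ ε) ^ n) := by
        gcongr
        exact norm_div_one_sub_pow_le (hu.trans hu') hqε n
      _ ≤ ‖c‖ * (q ^ ε * q ^ k / (1 - q ^ ε) ^ n) := by gcongr
      _ = _ := by ring
  have h := hasDerivAt_tsum_of_isPreconnected
    ((summable_geometric_of_lt_one hq0.le hq1).mul_left (‖c‖ / (1 - q ^ ε) ^ n * q ^ ε))
    (isOpen_lt continuous_const continuous_re) (convex_halfSpace_re_gt ε).isPreconnected
    (fun k v hv => hg k v (hε.trans hv)) hbound hwε hsum hwε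
  rwa [tsum_mul_left] at h

/-- A holomorphic logarithm of `qGamma q` on `0 < re w`; unlike `log ∘ qGamma` it has no branch
cuts there, and the two agree near the positive real axis. -/
noncomputable def logQGamma (q : ℝ) (w : ℂ) : ℂ :=
  (1 - w) * Real.log (1 - q) + ∑' k : ℕ, log (1 - (q : ℂ) * (q : ℂ) ^ k)
    - ∑' k : ℕ, log (1 - (q : ℂ) ^ w * (q : ℂ) ^ k)

lemma exp_logQGamma (hq0 : 0 < q) (hq1 : q < 1) {w : ℂ} (hw : 0 < w.re) :
    exp (logQGamma q w) = qGamma q w := by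
  have hq : ‖(q : ℂ)‖ < 1 := by rwa [norm_real, Real.norm_of_nonneg hq0.le]
  have hqw : ‖(q : ℂ) ^ w‖ < 1 := by
    simpa using norm_ofReal_cpow_mul_pow_lt_one hq0 hq1 hw 0
  have h1q : (1 - q : ℂ) ≠ 0 := by exact_mod_cast (sub_pos.2 hq1).ne'
  rw [logQGamma, Complex.exp_sub, Complex.exp_add, cexp_tsum_log_one_sub_mul_pow hq hq,
    cexp_tsum_log_one_sub_mul_pow hqw hq, qGamma, cpow_def_of_ne_zero h1q,
    ofReal_log (sub_pos.2 hq1).le, mul_comm (1 - w)]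
  push_cast
  rfl

lemma hasDerivAt_logQGamma (hq0 : 0 < q) (hq1 : q < 1) {w : ℂ} (hw : 0 < w.re) :
    HasDerivAt (logQGamma q)
      (-Real.log (1 - q) + Real.log q * lambertSeries 1 (q : ℂ) ((q : ℂ) ^ w)) w := by
  have hq : ‖(q : ℂ)‖ < 1 := by rwa [norm_real, Real.norm_of_nonneg hq0.le]
  have hlog := hasDerivAt_tsum_of_hasDerivAt_lambertTerm hq0 hq1
    (fun k v hv => hasDerivAt_log_one_sub_ofReal_cpow_mul_pow hq0 hq1 hv k) hw
    (summable_log_one_sub_mul_pow _ hq)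
  refine ((((hasDerivAt_id w).const_sub 1).mul_const _).add_const _ |>.sub hlog).congr_deriv ?_
  ring

lemma im_logQGamma_ofReal (hq0 : 0 < q) (hq1 : q < 1) {t : ℝ} (ht : 0 < t) :
    (logQGamma q t).im = 0 := by
  have hle {x : ℝ} (hx0 : 0 ≤ x) (hx1 : x ≤ 1) (k : ℕ) : x * q ^ k ≤ 1 :=
    mul_le_one₀ hx1 (pow_nonneg hq0.le k) (pow_le_one₀ hq0.le hq1.le)
  rw [logQGamma, ← ofReal_cpow hq0.le,
    tsum_log_one_sub_ofReal_mul_pow (hle hq0.le hq1.le),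
    tsum_log_one_sub_ofReal_mul_pow (hle (Real.rpow_nonneg hq0.le t)
      (Real.rpow_le_one hq0.le hq1.le ht.le))]
  simp

lemma eventually_re_pos {t : ℝ} (ht : 0 < t) : ∀ᶠ w : ℂ in 𝓝 (t : ℂ), 0 < w.re :=
  (isOpen_lt continuous_const continuous_re).mem_nhds (by simpa using ht)

lemma log_qGamma_eventuallyEq (hq0 : 0 < q) (hq1 : q < 1) {t : ℝ} (ht : 0 < t) :
    (fun w => log (qGamma q w)) =ᶠ[𝓝 (t : ℂ)] logQGamma q := by
  have hcont : Tendsto (fun w => (logQGamma q w).im) (𝓝 (t : ℂ)) (𝓝 0) := by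
    rw [← im_logQGamma_ofReal hq0 hq1 ht]
    exact continuous_im.continuousAt.comp
      (hasDerivAt_logQGamma hq0 hq1 (by simpa using ht)).continuousAt
  have him : ∀ᶠ w in 𝓝 (t : ℂ), (logQGamma q w).im ∈ Set.Ioo (-π) π :=
    hcont.eventually (Ioo_mem_nhds (neg_neg_of_pos pi_pos) pi_pos)
  filter_upwards [him, eventually_re_pos ht] with w hw hre
  rw [← exp_logQGamma hq0 hq1 hre, log_exp hw.1 hw.2.le]

lemma qDigamma_eventuallyEq (hq0 : 0 < q) (hq1 : q < 1) {t : ℝ} (ht : 0 < t) :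
    qDigamma q =ᶠ[𝓝 (t : ℂ)]
      fun w => -Real.log (1 - q) + Real.log q * lambertSeries 1 (q : ℂ) ((q : ℂ) ^ w) := by
  filter_upwards [(log_qGamma_eventuallyEq hq0 hq1 ht).eventually_nhds, eventually_re_pos ht]
    with w hw hre
  rw [qDigamma, EventuallyEq.deriv_eq hw]
  exact (hasDerivAt_logQGamma hq0 hq1 hre).deriv

lemma hasDerivAt_lambertSeries_one_ofReal_cpow (hq0 : 0 < q) (hq1 : q < 1) {w : ℂ}
    (hw : 0 < w.re) :
    HasDerivAt (fun v => lambertSeries 1 (q : ℂ) ((q : ℂ) ^ v))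
      (Real.log q * lambertSeries 2 (q : ℂ) ((q : ℂ) ^ w)) w := by
  have hq : ‖(q : ℂ)‖ < 1 := by rwa [norm_real, Real.norm_of_nonneg hq0.le]
  have hqw : ‖(q : ℂ) ^ w‖ < 1 := by
    simpa using norm_ofReal_cpow_mul_pow_lt_one hq0 hq1 hw 0
  exact hasDerivAt_tsum_of_hasDerivAt_lambertTerm hq0 hq1
    (fun k v hv => hasDerivAt_lambertTerm_ofReal_cpow hq0 hq1 hv k) hw
    (summable_lambertSeries hq hqw 1)

lemma qDigamma_ofReal (hq0 : 0 < q) (hq1 : q < 1) {t : ℝ} (ht : 0 < t) :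
    qDigamma q t = ((-Real.log (1 - q) + Real.log q * lambertSeries 1 q (q ^ t) : ℝ) : ℂ) := by
  rw [(qDigamma_eventuallyEq hq0 hq1 ht).eq_of_nhds, ← ofReal_cpow hq0.le,
    ← ofReal_lambertSeries]
  push_cast
  rfl

lemma deriv_qDigamma_ofReal (hq0 : 0 < q) (hq1 : q < 1) {t : ℝ} (ht : 0 < t) :
    deriv (qDigamma q) t = ((Real.log q ^ 2 * lambertSeries 2 q (q ^ t) : ℝ) : ℂ) := by
  rw [(qDigamma_eventuallyEq hq0 hq1 ht).deriv_eq,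
    (((hasDerivAt_lambertSeries_one_ofReal_cpow hq0 hq1 (by simpa using ht)).const_mul
      (Real.log q : ℂ)).const_add _).deriv, ← ofReal_cpow hq0.le, ← ofReal_lambertSeries]
  push_cast
  ring

end QDigammaSeries

theorem f_sub_g_pos (q θ α : ℝ) (hq0 : 0 < q) (hq1 : q < 1) (hθ : 0 < θ)
    (hα0 : 0 < α) (hα : α < q ^ θ) :
    0 < (fC q θ - gC q θ α).re ∧ (fC q θ - gC q θ α).im = 0 := by
  have hx0 : 0 < q ^ θ := Real.rpow_pos_of_pos hq0 θ
  have hx1 : q ^ θ < 1 := Real.rpow_lt_one hq0.le hq1 hθ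
  have hA : 0 < Aq q α :=
    div_pos_of_neg_of_neg (Real.log_neg hα0 (hα.trans hx1)) (Real.log_neg hq0 hq1)
  have hqA : q ^ Aq q α = α := Real.rpow_logb hq0 hq1.ne hα0
  have hlogC : (Real.log q : ℂ) ≠ 0 := ofReal_ne_zero.2 (Real.log_neg hq0 hq1).ne
  have hxC : ((q ^ θ : ℝ) : ℂ) ≠ 0 := ofReal_ne_zero.2 hx0.ne'
  have key : fC q θ - gC q θ α = ((lambertSeries 1 q α - (lambertSeries 1 q (q ^ θ)
      + (α - q ^ θ) / q ^ θ * lambertSeries 2 q (q ^ θ)) : ℝ) : ℂ) := by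
    rw [fC, gC, deriv_qDigamma_ofReal hq0 hq1 hθ, qDigamma_ofReal hq0 hq1 hθ,
      qDigamma_ofReal hq0 hq1 hA, hqA, ← ofReal_cpow hq0.le]
    push_cast
    field_simp
    ring
  have hgap := lambertSeries_one_add_lt (abs_lt.2 ⟨by linarith, hq1⟩)
    (abs_lt.2 ⟨by linarith, hx1⟩) (abs_lt.2 ⟨by linarith, hα.trans hx1⟩) hx0.ne' hα.ne'
  rw [key, ofReal_re, ofReal_im]
  exact ⟨sub_pos.2 hgap, rfl⟩
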